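/- Let h : ℝ^d → ℝ^d be Lipschitz with Lipschitz constant L, let B, K : [0,t] → ℝ^d be continuous with K nondecreasing in each component, and set X = B + K. For a partition Π_n = {0 = t_0^n < ... < t_{N_n}^n = t} define S_n := Σ_i ∫_{t_i^n}^{t_{i+1}^n} h(B_r + K_{t_i^n}) dr. Then |∫_0^t h(X_r) dr − S_n| ≤ L · |Π_n| · |K_t − K_0|, where |Π_n| is the mesh of the partition; in particular S_n → ∫_0^t h(X_r) dr as the mesh tends to 0. -/

import Mathlib

open Set intervalIntegral

/-- `ℝ^d` with the ℓ¹-norm `|x| = Σ_i |x_i|`. -/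
abbrev L1space (d : ℕ) := PiLp 1 (fun _ : Fin d => ℝ)

/-- Riemann-sum approximation with frozen drift argument: if `h` is `L`-Lipschitz,
`K` is continuous and nondecreasing in each component, `X = B + K`, and
`Π = {0 = t_0 < ⋯ < t_N = t}` is a partition of mesh at most `m`, then
`|∫_0^t h(X_r) dr − Σ_i ∫_{t_i}^{t_{i+1}} h(B_r + K_{t_i}) dr| ≤ L · m · |K_t − K_0|`. -/
theorem riemann_freeze_error {d : ℕ} {t L m : ℝ} (ht : 0 ≤ t) (hL : 0 ≤ L) (hm : 0 ≤ m)
    (h : L1space d → L1space d)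
    (hLip : ∀ x y : L1space d, ‖h x - h y‖ ≤ L * ‖x - y‖)
    (B K : ℝ → L1space d)
    (hB : ContinuousOn B (Icc 0 t)) (hK : ContinuousOn K (Icc 0 t))
    (hmono : ∀ i : Fin d, MonotoneOn (fun r => K r i) (Icc 0 t))
    {N : ℕ} (p : Fin (N + 1) → ℝ) (hp : Monotone p)
    (hp0 : p 0 = 0) (hpt : p (Fin.last N) = t)
    (hmesh : ∀ i : Fin N, p i.succ - p i.castSucc ≤ m) :
    ‖(∫ r in (0:ℝ)..t, h (B r + K r)) -
        ∑ i : Fin N, ∫ r in (p i.castSucc)..(p i.succ), h (B r + K (p i.castSucc))‖ ≤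
      L * m * ‖K t - K 0‖ := by
  classical
  have hnorm : ∀ x : L1space d, ‖x‖ = ∑ j, |x j| := by
    intro x
    have h1 : (0:ℝ) < (1 : ENNReal).toReal := by norm_num
    simp [PiLp.norm_eq_sum h1, Real.norm_eq_abs]
  have hcont : Continuous h := by
    refine (LipschitzWith.of_dist_le_mul (K := ⟨L, hL⟩) ?_).continuous
    intro x y
    exact (show dist (h x) (h y) ≤ L * dist x y by simpa [dist_eq_norm] using hLip x y)
  have hmem : ∀ i : Fin (N+1), p i ∈ Icc 0 t := by
    intro i
    exact ⟨hp0 ▸ hp (Fin.zero_le i), hpt ▸ hp (Fin.le_last i)⟩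
  have hle : ∀ i : Fin N, p i.castSucc ≤ p i.succ :=
    fun i => hp (Fin.castSucc_le_succ i)
  have hIccsub : ∀ i : Fin N, Icc (p i.castSucc) (p i.succ) ⊆ Icc 0 t :=
    fun i => Icc_subset_Icc (hmem _).1 (hmem _).2
  have hXcont : ContinuousOn (fun r => h (B r + K r)) (Icc 0 t) :=
    hcont.comp_continuousOn (hB.add hK)
  have hintX : ∀ i : Fin N, IntervalIntegrable (fun r => h (B r + K r)) MeasureTheory.volume
      (p i.castSucc) (p i.succ) := by
    intro i
    apply ContinuousOn.intervalIntegrable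
    rw [uIcc_of_le (hle i)]
    exact hXcont.mono (hIccsub i)
  have hintF : ∀ i : Fin N, IntervalIntegrable (fun r => h (B r + K (p i.castSucc)))
      MeasureTheory.volume (p i.castSucc) (p i.succ) := by
    intro i
    apply ContinuousOn.intervalIntegrable
    rw [uIcc_of_le (hle i)]
    exact hcont.comp_continuousOn ((hB.mono (hIccsub i)).add continuousOn_const)
  -- reindex partition by ℕ
  set q : ℕ → ℝ := fun n => p ⟨min n N, Nat.lt_succ_of_le (min_le_right _ _)⟩ with hq
  have hq0 : q 0 = 0 := by
    have : (⟨min 0 N, Nat.lt_succ_of_le (min_le_right _ _)⟩ : Fin (N+1)) = 0 := by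
      ext; simp
    rw [hq]; simpa [this] using hp0
  have hqN : q N = t := by
    have : (⟨min N N, Nat.lt_succ_of_le (min_le_right _ _)⟩ : Fin (N+1)) = Fin.last N := by
      ext; simp
    rw [hq]; exact (congrArg p this).trans hpt
  have hqc : ∀ i : Fin N, q (i : ℕ) = p i.castSucc := by
    intro i
    exact congrArg p (Fin.ext (by simp [Nat.min_eq_left i.isLt.le]))
  have hqs : ∀ i : Fin N, q ((i : ℕ) + 1) = p i.succ := by
    intro i
    exact congrArg p (Fin.ext (by simp [Nat.min_eq_left i.isLt]))
  -- split the integral over the partition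
  have hsplit : (∫ r in (0:ℝ)..t, h (B r + K r)) =
      ∑ i : Fin N, ∫ r in (p i.castSucc)..(p i.succ), h (B r + K r) := by
    have hint' : ∀ i < N, IntervalIntegrable (fun r => h (B r + K r)) MeasureTheory.volume
        (q i) (q (i+1)) := by
      intro i hi
      have := hintX ⟨i, hi⟩
      rwa [← hqc ⟨i, hi⟩, ← hqs ⟨i, hi⟩] at this
    have := intervalIntegral.sum_integral_adjacent_intervals hint'
    rw [hq0, hqN] at this
    rw [← Fin.sum_univ_eq_sum_range (fun k => ∫ x in q k..q (k+1), h (B x + K x)) N] at this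
    rw [← this]
    exact Finset.sum_congr rfl fun i _ => by rw [hqc i, hqs i]
  rw [hsplit, ← Finset.sum_sub_distrib]
  have hterm : ∀ i : Fin N,
      ‖(∫ r in (p i.castSucc)..(p i.succ), h (B r + K r)) -
        ∫ r in (p i.castSucc)..(p i.succ), h (B r + K (p i.castSucc))‖ ≤
        L * m * ‖K (p i.succ) - K (p i.castSucc)‖ := by
    intro i
    rw [← intervalIntegral.integral_sub (hintX i) (hintF i)]
    have hbd : ∀ r ∈ Set.uIoc (p i.castSucc) (p i.succ),
        ‖h (B r + K r) - h (B r + K (p i.castSucc))‖ ≤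
          L * ‖K (p i.succ) - K (p i.castSucc)‖ := by
      intro r hr
      rw [Set.uIoc_of_le (hle i)] at hr
      have hr' : r ∈ Icc 0 t := hIccsub i ⟨hr.1.le, hr.2⟩
      have ha : p i.castSucc ∈ Icc 0 t := hmem _
      have hb : p i.succ ∈ Icc 0 t := hmem _
      have h1 : ‖h (B r + K r) - h (B r + K (p i.castSucc))‖ ≤
          L * ‖K r - K (p i.castSucc)‖ := by
        have := hLip (B r + K r) (B r + K (p i.castSucc))
        simpa [add_sub_add_left_eq_sub] using this
      have h2 : ‖K r - K (p i.castSucc)‖ ≤ ‖K (p i.succ) - K (p i.castSucc)‖ := by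
        rw [hnorm, hnorm]
        refine Finset.sum_le_sum fun j _ => ?_
        have hjr : K (p i.castSucc) j ≤ K r j := hmono j ha hr' hr.1.le
        have hjb : K r j ≤ K (p i.succ) j := hmono j hr' hb hr.2
        have e1 : (K r - K (p i.castSucc)) j = K r j - K (p i.castSucc) j := rfl
        have e2 : (K (p i.succ) - K (p i.castSucc)) j
            = K (p i.succ) j - K (p i.castSucc) j := rfl
        rw [e1, e2, abs_of_nonneg (by linarith), abs_of_nonneg (by linarith)]
        linarith
      calc ‖h (B r + K r) - h (B r + K (p i.castSucc))‖
          ≤ L * ‖K r - K (p i.castSucc)‖ := h1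
        _ ≤ L * ‖K (p i.succ) - K (p i.castSucc)‖ := by
            exact mul_le_mul_of_nonneg_left h2 hL
    have := intervalIntegral.norm_integral_le_of_norm_le_const hbd
    have habs : |p i.succ - p i.castSucc| ≤ m := by
      rw [abs_of_nonneg (by linarith [hle i])]; exact hmesh i
    calc ‖∫ r in (p i.castSucc)..(p i.succ),
            (h (B r + K r) - h (B r + K (p i.castSucc)))‖
        ≤ L * ‖K (p i.succ) - K (p i.castSucc)‖ * |p i.succ - p i.castSucc| := this
      _ ≤ L * ‖K (p i.succ) - K (p i.castSucc)‖ * m := by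
          refine mul_le_mul_of_nonneg_left habs ?_
          positivity
      _ = L * m * ‖K (p i.succ) - K (p i.castSucc)‖ := by ring
  have htel : ∑ i : Fin N, ‖K (p i.succ) - K (p i.castSucc)‖ = ‖K t - K 0‖ := by
    have key : ∀ i : Fin N, ‖K (p i.succ) - K (p i.castSucc)‖
        = ∑ j, (K (p i.succ) j - K (p i.castSucc) j) := by
      intro i
      rw [hnorm]
      refine Finset.sum_congr rfl fun j _ => ?_
      have : K (p i.castSucc) j ≤ K (p i.succ) j := hmono j (hmem _) (hmem _) (hle i)
      have e : (K (p i.succ) - K (p i.castSucc)) j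
          = K (p i.succ) j - K (p i.castSucc) j := rfl
      rw [e, abs_of_nonneg (by linarith)]
    have h0t : (0:ℝ) ∈ Icc 0 t := ⟨le_refl _, ht⟩
    have htt : t ∈ Icc 0 t := ⟨ht, le_refl _⟩
    calc ∑ i : Fin N, ‖K (p i.succ) - K (p i.castSucc)‖
        = ∑ i : Fin N, ∑ j, (K (p i.succ) j - K (p i.castSucc) j) := by
          exact Finset.sum_congr rfl fun i _ => key i
      _ = ∑ j, ∑ i : Fin N, (K (p i.succ) j - K (p i.castSucc) j) := Finset.sum_comm
      _ = ∑ j, (K t j - K 0 j) := by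
          refine Finset.sum_congr rfl fun j _ => ?_
          have : ∑ i : Fin N, (K (p i.succ) j - K (p i.castSucc) j)
              = ∑ i ∈ Finset.range N, (K (q (i+1)) j - K (q i) j) := by
            rw [← Fin.sum_univ_eq_sum_range (fun k => K (q (k+1)) j - K (q k) j) N]
            exact Finset.sum_congr rfl fun i _ => by rw [hqc i, hqs i]
          rw [this, Finset.sum_range_sub (fun n => K (q n) j), hq0, hqN]
      _ = ‖K t - K 0‖ := by
          rw [hnorm]
          refine Finset.sum_congr rfl fun j _ => ?_
          have : K 0 j ≤ K t j := hmono j h0t htt ht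
          have e : (K t - K 0) j = K t j - K 0 j := rfl
          rw [e, abs_of_nonneg (by linarith)]
  calc ‖∑ i : Fin N, ((∫ r in (p i.castSucc)..(p i.succ), h (B r + K r)) -
          ∫ r in (p i.castSucc)..(p i.succ), h (B r + K (p i.castSucc)))‖
      ≤ ∑ i : Fin N, ‖(∫ r in (p i.castSucc)..(p i.succ), h (B r + K r)) -
          ∫ r in (p i.castSucc)..(p i.succ), h (B r + K (p i.castSucc))‖ :=
        norm_sum_le _ _
    _ ≤ ∑ i : Fin N, L * m * ‖K (p i.succ) - K (p i.castSucc)‖ :=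
        Finset.sum_le_sum fun i _ => hterm i
    _ = L * m * ∑ i : Fin N, ‖K (p i.succ) - K (p i.castSucc)‖ := by
        rw [Finset.mul_sum]
    _ = L * m * ‖K t - K 0‖ := by rw [htel]
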